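/- arXiv:1311.3980 — 3 statements merged into one kernel-verified Lean document; each statement's English description precedes it below -/
import Mathlib

section
/- Let $\Gamma$ be a group, let $w, w' \in \Gamma$, let $p$ be a prime and $n$ a natural number. If the quotient $\Gamma/\langle\langle w \rangle\rangle$ admits a surjective group homomorphism onto $(\mathbb{Z}/p\mathbb{Z})^{n+1}$, then the quotient $\Gamma/\langle\langle w' \rangle\rangle$ admits a surjective group homomorphism onto $(\mathbb{Z}/p\mathbb{Z})^{n}$. -/
lemma aux_lin (p : ℕ) (hp : p.Prime) (n : ℕ) (x : Fin (n + 1) → ZMod p) :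
    ∃ L : (Fin (n + 1) → ZMod p) →ₗ[ZMod p] (Fin n → ZMod p),
      Function.Surjective L ∧ L x = 0 := by
  haveI : Fact p.Prime := ⟨hp⟩
  have hS : Module.finrank (ZMod p) (Submodule.span (ZMod p) {x}) ≤ 1 := by
    simpa using finrank_span_le_card (R := ZMod p) ({x} : Set (Fin (n + 1) → ZMod p))
  have hsum := (Submodule.span (ZMod p) {x}).finrank_quotient_add_finrank
  have hV : Module.finrank (ZMod p) (Fin (n + 1) → ZMod p) = n + 1 := by
    simp [Module.finrank_pi]
  rw [hV] at hsum
  have hn : n ≤ Module.finrank (ZMod p)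
      ((Fin (n + 1) → ZMod p) ⧸ Submodule.span (ZMod p) {x}) := by omega
  set m := Module.finrank (ZMod p)
      ((Fin (n + 1) → ZMod p) ⧸ Submodule.span (ZMod p) {x}) with hm
  let B := Module.finBasis (ZMod p)
      ((Fin (n + 1) → ZMod p) ⧸ Submodule.span (ZMod p) {x})
  let π : (Fin m → ZMod p) →ₗ[ZMod p] (Fin n → ZMod p) :=
    LinearMap.funLeft (ZMod p) (ZMod p) (Fin.castLE hn)
  refine ⟨π ∘ₗ (B.equivFun : _ →ₗ[ZMod p] (Fin m → ZMod p)) ∘ₗ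
      (Submodule.span (ZMod p) {x}).mkQ, ?_, ?_⟩
  · exact (LinearMap.funLeft_surjective_of_injective (ZMod p) (ZMod p)
      (Fin.castLE hn) (Fin.castLE_injective hn)).comp
      (B.equivFun.surjective.comp (Submodule.mkQ_surjective _))
  · have hx : (Submodule.span (ZMod p) {x}).mkQ x = 0 :=
      (Submodule.Quotient.mk_eq_zero _).mpr (Submodule.mem_span_singleton_self x)
    rw [LinearMap.comp_apply, LinearMap.comp_apply, hx]
    simp

/-- If `Γ ⧸ ⟪w⟫` surjects onto `(ℤ/pℤ)^(n+1)`, then `Γ ⧸ ⟪w'⟫` surjects onto `(ℤ/pℤ)^n`. -/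
theorem stmt2 (Γ : Type*) [Group Γ] (w w' : Γ) (p : ℕ) (hp : p.Prime) (n : ℕ)
    (h : ∃ φ : Γ ⧸ Subgroup.normalClosure {w} →* (Fin (n + 1) → Multiplicative (ZMod p)),
      Function.Surjective φ) :
    ∃ ψ : Γ ⧸ Subgroup.normalClosure {w'} →* (Fin n → Multiplicative (ZMod p)),
      Function.Surjective ψ := by
  obtain ⟨φ, hφ⟩ := h
  -- f : Γ →* (Fin (n+1) → Multiplicative (ZMod p))
  let f : Γ →* (Fin (n + 1) → Multiplicative (ZMod p)) :=
    φ.comp (QuotientGroup.mk' _)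
  have hf : Function.Surjective f := hφ.comp (QuotientGroup.mk'_surjective _)
  let e := (MulEquiv.piMultiplicative (fun _ : Fin (n + 1) => ZMod p)).symm
  let e' := MulEquiv.piMultiplicative (fun _ : Fin n => ZMod p)
  obtain ⟨L, hLs, hLx⟩ := aux_lin p hp n (Multiplicative.toAdd (e (f w')))
  let g : Γ →* (Fin n → Multiplicative (ZMod p)) :=
    (e'.toMonoidHom.comp ((AddMonoidHom.toMultiplicative L.toAddMonoidHom).comp
      e.toMonoidHom)).comp f
  have hg : Function.Surjective g :=
    e'.surjective.comp ((hLs.comp e.surjective).comp hf)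
  have hgw' : g w' = 1 := by
    have : L (Multiplicative.toAdd (e (f w'))) = 0 := hLx
    simp only [g, MonoidHom.comp_apply, MulEquiv.coe_toMonoidHom,
      AddMonoidHom.toMultiplicative_apply_apply, LinearMap.toAddMonoidHom_coe, this]
    simp
  have hle : Subgroup.normalClosure {w'} ≤ g.ker := by
    apply Subgroup.normalClosure_le_normal
    simp [Set.singleton_subset_iff, MonoidHom.mem_ker, hgw']
  exact ⟨QuotientGroup.lift _ g hle, fun y => by
    obtain ⟨x, hx⟩ := hg y
    exact ⟨QuotientGroup.mk x, hx⟩⟩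
end

section
/- Let $p$ be a prime and let $m \leq n$ be natural numbers. Suppose $G_0, G_1, \ldots, G_k$ are groups such that for each $0 \leq i < k$ there exist a group $\Gamma_i$ and elements $w_i, w_i' \in \Gamma_i$ together with surjective homomorphisms $\Gamma_i/\langle\langle w_i \rangle\rangle \to G_i$ and $\Gamma_i/\langle\langle w_i' \rangle\rangle \to G_{i+1}$ that are isomorphisms. If $G_0$ admits a surjective homomorphism onto $(\mathbb{Z}/p\mathbb{Z})^n$ and $G_k$ admits no surjective homomorphism onto $(\mathbb{Z}/p\mathbb{Z})^{m+1}$, then $k \geq n - m$. -/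
/-!
Over `𝔽_p` a surjection `Γ ↠ (ℤ/p)^r` is a linear surjection onto an `r`-dimensional space.
Passing to `Γ ⧸ ⟪w⟫` only kills the line spanned by the image of `w`, so `(ℤ/p)^(r-1)` is
still a quotient. Along the chain the exponent thus drops by at most one per step, from `n`
at `G 0` to at least `n - k` at `G k`; since `G k` has no quotient `(ℤ/p)^(m+1)`, `n - k ≤ m`.
-/

universe u

open Module Subgroup

def SurjectsOnto (G H : Type*) [Group G] [Group H] : Prop :=
  ∃ φ : G →* H, Function.Surjective φ

section SurjectsOnto

variable {G H L : Type*} [Group G] [Group H] [Group L]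

theorem SurjectsOnto.trans (h₁ : SurjectsOnto G H) (h₂ : SurjectsOnto H L) :
    SurjectsOnto G L := by
  obtain ⟨φ, hφ⟩ := h₁
  obtain ⟨ψ, hψ⟩ := h₂
  exact ⟨ψ.comp φ, hψ.comp hφ⟩

theorem MulEquiv.surjectsOnto (e : G ≃* H) : SurjectsOnto G H :=
  ⟨e, e.surjective⟩

theorem surjectsOnto_quotient_normalClosure_singleton {w : G} (φ : G →* H)
    (hφ : Function.Surjective φ) (hw : φ w = 1) :
    SurjectsOnto (G ⧸ normalClosure {w}) H := by
  have hle : normalClosure {w} ≤ φ.ker :=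
    normalClosure_le_normal (Set.singleton_subset_iff.mpr hw)
  exact ⟨QuotientGroup.lift _ φ hle, QuotientGroup.lift_surjective_of_surjective _ φ hφ hle⟩

theorem surjectsOnto_pi_fin_of_le (M : Type*) [Group M] {a b : ℕ} (hab : a ≤ b) :
    SurjectsOnto (Fin b → M) (Fin a → M) :=
  ⟨MonoidHom.mk' (fun v => v ∘ Fin.castLE hab) fun _ _ => rfl,
    (Fin.castLE_injective hab).surjective_comp_right⟩

end SurjectsOnto

section LinearAlgebra

variable {K V : Type*} [DivisionRing K] [AddCommGroup V] [Module K V] [FiniteDimensional K V]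

theorem finrank_le_finrank_quotient_span_singleton_add_one (a : V) :
    finrank K V ≤ finrank K (V ⧸ K ∙ a) + 1 := by
  have hline : finrank K (K ∙ a) ≤ 1 := by
    simpa using finrank_span_le_card (R := K) ({a} : Set V)
  have := (K ∙ a).finrank_quotient_add_finrank
  omega

theorem surjectsOnto_multiplicative_of_le_finrank {r : ℕ} (hr : r ≤ finrank K V) :
    SurjectsOnto (Multiplicative V) (Fin r → Multiplicative K) :=
  (AddEquiv.toMultiplicative (finBasis K V).equivFun.toAddEquiv).surjectsOnto.trans <|
    (MulEquiv.piMultiplicative _).surjectsOnto.trans <| surjectsOnto_pi_fin_of_le _ hr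

end LinearAlgebra

theorem SurjectsOnto.quotient_normalClosure_singleton {K Γ : Type*} [Field K] [Group Γ]
    {r : ℕ} (h : SurjectsOnto Γ (Fin r → Multiplicative K)) (w : Γ) :
    SurjectsOnto (Γ ⧸ normalClosure {w}) (Fin (r - 1) → Multiplicative K) := by
  obtain ⟨φ, hφ⟩ := h.trans (MulEquiv.piMultiplicative fun _ : Fin r => K).symm.surjectsOnto
  let a : Fin r → K := Multiplicative.toAdd (φ w)
  let π : Γ →* Multiplicative ((Fin r → K) ⧸ K ∙ a) :=
    (AddMonoidHom.toMultiplicative (K ∙ a).mkQ.toAddMonoidHom).comp φ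
  have hπ : Function.Surjective π := (K ∙ a).mkQ_surjective.comp hφ
  have hπw : π w = 1 :=
    (Submodule.Quotient.mk_eq_zero _).mpr (Submodule.mem_span_singleton_self a)
  have hrank : r - 1 ≤ finrank K ((Fin r → K) ⧸ K ∙ a) := by
    have := finrank_le_finrank_quotient_span_singleton_add_one (K := K) a
    rw [finrank_fin_fun] at this
    omega
  exact (surjectsOnto_quotient_normalClosure_singleton π hπ hπw).trans
    (surjectsOnto_multiplicative_of_le_finrank hrank)

theorem stmt3_general (p : ℕ) (hp : p.Prime) (m n k : ℕ)
    (G : Fin (k + 1) → Type u) (instG : ∀ i, Group (G i))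
    (hchain : ∀ i : Fin k, ∃ (Γ : Type u) (_ : Group Γ) (w w' : Γ)
      (f : Γ ⧸ Subgroup.normalClosure {w} →* G i.castSucc)
      (g : Γ ⧸ Subgroup.normalClosure {w'} →* G i.succ),
        Function.Surjective f ∧ Function.Surjective g ∧
        Function.Bijective f ∧ Function.Bijective g)
    (h0 : ∃ φ : G 0 →* (Fin n → Multiplicative (ZMod p)), Function.Surjective φ)
    (hk : ¬ ∃ ψ : G (Fin.last k) →* (Fin (m + 1) → Multiplicative (ZMod p)),
      Function.Surjective ψ) :
    k ≥ n - m := by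
  have : Fact p.Prime := ⟨hp⟩
  have hsurj : ∀ i : Fin (k + 1),
      SurjectsOnto (G i) (Fin (n - i) → Multiplicative (ZMod p)) := by
    refine Fin.induction h0 fun i hi => ?_
    obtain ⟨Γ, _, w, w', f, g, hf, -, -, hg⟩ := hchain i
    have hΓ : SurjectsOnto Γ (Fin (n - i) → Multiplicative (ZMod p)) :=
      .trans ⟨QuotientGroup.mk' (normalClosure {w}), QuotientGroup.mk'_surjective _⟩ <|
        .trans ⟨f, hf⟩ hi
    rw [Fin.val_succ, ← Nat.sub_sub]
    exact (MulEquiv.ofBijective g hg).symm.surjectsOnto.trans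
      (hΓ.quotient_normalClosure_singleton w')
  by_contra hlt
  exact hk <| (hsurj (Fin.last k)).trans <|
    surjectsOnto_pi_fin_of_le _ (by rw [Fin.val_last]; omega)

/-- Abstraction of Lemma 5.1: along a chain of `k` "surgery moves" (replacing
`Γᵢ ⧸ ⟪wᵢ⟫` by `Γᵢ ⧸ ⟪wᵢ'⟫`), the maximal rank of an elementary abelian `p`-quotient
drops by at most one at each step, so `k ≥ n - m`. -/
theorem stmt3 (p : ℕ) (hp : p.Prime) (m n k : ℕ) (hmn : m ≤ n)
    (G : Fin (k + 1) → Type u) (instG : ∀ i, Group (G i))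
    (hchain : ∀ i : Fin k, ∃ (Γ : Type u) (_ : Group Γ) (w w' : Γ)
      (f : Γ ⧸ Subgroup.normalClosure {w} →* G i.castSucc)
      (g : Γ ⧸ Subgroup.normalClosure {w'} →* G i.succ),
        Function.Surjective f ∧ Function.Surjective g ∧
        Function.Bijective f ∧ Function.Bijective g)
    (h0 : ∃ φ : G 0 →* (Fin n → Multiplicative (ZMod p)), Function.Surjective φ)
    (hk : ¬ ∃ ψ : G (Fin.last k) →* (Fin (m + 1) → Multiplicative (ZMod p)),
      Function.Surjective ψ) :
    k ≥ n - m :=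
  stmt3_general p hp m n k G instG hchain h0 hk
end

section
/- Let $n \geq 1$ be a natural number. Consider the group $P$ presented by four generators $a_1, a_2, a_3, a_4$ subject to the five relations $b_1 = (a_1^{-1} a_2)^{10n} a_4^{-1} a_1^2$, $b_2 = a_2^{-1} a_3 (a_2^{-1} a_1)^{10n} a_2^{-1}$, $b_3 = (a_4^{-1} a_3)^{10n+3} a_3^{-1} a_2 a_3^{-2}$, $b_4 = a_1^{-1} a_4 (a_3^{-1} a_4)^{10n+3} a_4^{2}$, and $a_1$. Then $P$ is the trivial group. -/
/-!
Killing `a₁` turns the first two relators into `a₄ = a₂ ^ 10n` and `a₃ = a₂ ^ (10n + 2)`.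
Substituting these, the last two relators become `a₂ ^ (1 - 10n) = 1` and `a₂ ^ (10n - 6) = 1`.
The exponents are coprime, so `a₂ = 1`, and then every generator is trivial.
-/

/-- The relators of the presentation of `π₁(Mₙ)` together with the extra relator `a₁`.
Generators `a₁, a₂, a₃, a₄` correspond to `FreeGroup.of 0, ..., FreeGroup.of 3`. -/
def kanenobuRels (n : ℕ) : Set (FreeGroup (Fin 4)) :=
  let a : Fin 4 → FreeGroup (Fin 4) := fun i => FreeGroup.of i
  { ((a 0)⁻¹ * a 1) ^ (10 * n) * (a 3)⁻¹ * (a 0) ^ 2,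
    (a 1)⁻¹ * a 2 * ((a 1)⁻¹ * a 0) ^ (10 * n) * (a 1)⁻¹,
    ((a 3)⁻¹ * a 2) ^ (10 * n + 3) * (a 2)⁻¹ * a 1 * ((a 2) ^ 2)⁻¹,
    (a 0)⁻¹ * a 3 * ((a 2)⁻¹ * a 3) ^ (10 * n + 3) * (a 3) ^ 2,
    a 0 }

theorem eq_one_of_zpow_eq_one_of_isCoprime {G : Type*} [Group G] {g : G} {a b : ℤ}
    (hab : IsCoprime a b) (ha : g ^ a = 1) (hb : g ^ b = 1) : g = 1 := by
  obtain ⟨u, v, huv⟩ := hab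
  calc g = g ^ (u * a + v * b) := by rw [huv, zpow_one]
    _ = 1 := by rw [zpow_add, mul_comm u, mul_comm v, zpow_mul, zpow_mul, ha, hb, one_zpow,
      one_zpow, one_mul]

theorem PresentedGroup.eq_one_of_of_eq_one {α : Type*} {rels : Set (FreeGroup α)}
    (h : ∀ i : α, (of i : PresentedGroup rels) = 1) (x : PresentedGroup rels) : x = 1 :=
  DFunLike.congr_fun (PresentedGroup.ext (φ := MonoidHom.id _) (ψ := 1) h) x

section KanenobuRelators

variable {G : Type*} [Group G] (n : ℕ) {b c d : G}

theorem kanenobu_zpow_eq_one_of_relators (h1 : b ^ (10 * n) * d⁻¹ = 1)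
    (h2 : b⁻¹ * c * (b ^ (10 * n))⁻¹ * b⁻¹ = 1)
    (h3 : (d⁻¹ * c) ^ (10 * n + 3) * c⁻¹ * b * (c ^ 2)⁻¹ = 1)
    (h4 : d * (c⁻¹ * d) ^ (10 * n + 3) * d ^ 2 = 1) :
    b ^ (1 - 10 * (n : ℤ)) = 1 ∧ b ^ (10 * (n : ℤ) - 6) = 1 := by
  have hd : d = b ^ (10 * n) := (mul_inv_eq_one.mp h1).symm
  have hc : c = b ^ (10 * n + 2) := by
    calc c = b * (b⁻¹ * c * (b ^ (10 * n))⁻¹ * b⁻¹) * b * b ^ (10 * n) := by group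
      _ = b ^ (10 * n + 2) := by rw [h2]; group
  subst hc hd
  constructor
  · rw [← h3]; group
  · rw [← h4]; group

theorem kanenobu_generators_eq_one_of_relators {a : G}
    (h1 : (a⁻¹ * b) ^ (10 * n) * d⁻¹ * a ^ 2 = 1)
    (h2 : b⁻¹ * c * (b⁻¹ * a) ^ (10 * n) * b⁻¹ = 1)
    (h3 : (d⁻¹ * c) ^ (10 * n + 3) * c⁻¹ * b * (c ^ 2)⁻¹ = 1)
    (h4 : a⁻¹ * d * (c⁻¹ * d) ^ (10 * n + 3) * d ^ 2 = 1) (ha : a = 1) :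
    b = 1 ∧ c = 1 ∧ d = 1 := by
  subst ha
  simp only [inv_one, one_mul, one_pow, mul_one, inv_pow] at h1 h2 h4
  obtain ⟨hb₁, hb₂⟩ := kanenobu_zpow_eq_one_of_relators n h1 h2 h3 h4
  have hcop : IsCoprime (1 - 10 * (n : ℤ)) (10 * n - 6) := ⟨1 - 2 * n, -2 * n, by ring⟩
  have hb : b = 1 := eq_one_of_zpow_eq_one_of_isCoprime hcop hb₁ hb₂
  subst hb
  simp only [one_pow, inv_one, one_mul, mul_one, inv_eq_one] at h1 h2
  exact ⟨rfl, h2, h1⟩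

end KanenobuRelators

theorem stmt4_general (n : ℕ) : ∀ x : PresentedGroup (kanenobuRels n), x = 1 := by
  have rel : ∀ r ∈ kanenobuRels n, PresentedGroup.mk _ r = 1 := fun _ ↦ PresentedGroup.one_of_mem
  have h1 := rel _ (Or.inl rfl)
  have h2 := rel _ (Or.inr (Or.inl rfl))
  have h3 := rel _ (Or.inr (Or.inr (Or.inl rfl)))
  have h4 := rel _ (Or.inr (Or.inr (Or.inr (Or.inl rfl))))
  have ha := rel _ (Or.inr (Or.inr (Or.inr (Or.inr rfl))))
  simp only [map_mul, map_pow, map_inv] at h1 h2 h3 h4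
  obtain ⟨hb, hc, hd⟩ := kanenobu_generators_eq_one_of_relators n h1 h2 h3 h4 ha
  refine PresentedGroup.eq_one_of_of_eq_one fun i ↦ ?_
  fin_cases i
  exacts [ha, hb, hc, hd]

/-- The group presented by `⟨a₁,a₂,a₃,a₄ ∣ b₁,b₂,b₃,b₄,a₁⟩` is trivial,
i.e. `π₁(Mₙ) ⧸ ⟪a₁⟫ = 1`. -/
theorem stmt4 (n : ℕ) (hn : 1 ≤ n) : ∀ x : PresentedGroup (kanenobuRels n), x = 1 :=
  stmt4_general n
end
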